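/- arXiv:1701.04165 — 3 statements merged into one kernel-verified Lean document; each statement's English description precedes it below -/
import Mathlib

section
/- A linear code C over a finite field GF(q) with generator matrix G satisfies C ∩ C⊥ = {0} if and only if det(G Gᵀ) ≠ 0. -/
open Matrix

/-- The dual code of a linear code `C ⊆ F^n` under the standard bilinear form. -/
def dualCode {F : Type} [Field F] {n : ℕ} (C : Submodule F (Fin n → F)) :
    Submodule F (Fin n → F) where
  carrier := {v | ∀ c ∈ C, v ⬝ᵥ c = 0}
  add_mem' := by
    intro a b ha hb c hc
    simp [add_dotProduct, ha c hc, hb c hc]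
  zero_mem' := by
    intro c hc
    simp
  smul_mem' := by
    intro r a ha c hc
    simp [smul_dotProduct, ha c hc]

/-! The codewords of the code generated by `G` are the vectors `x ᵥ* G`, and `x ᵥ* G` is
orthogonal to every row of `G` exactly when `x ᵥ* (G * Gᵀ) = 0`; when the rows are independent,
`x ↦ x ᵥ* G` is injective, so `C ∩ C⊥ = 0` says that `G * Gᵀ` has trivial left kernel. -/

section

variable {F : Type} [Field F] {n k : ℕ}

theorem mem_dualCode_span_range_iff {ι : Type*} {v : Fin n → F} {f : ι → Fin n → F} :
    v ∈ dualCode (Submodule.span F (Set.range f)) ↔ ∀ i, v ⬝ᵥ f i = 0 := by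
  refine ⟨fun h i => h _ (Submodule.subset_span ⟨i, rfl⟩), fun h c hc => ?_⟩
  induction hc using Submodule.span_induction with
  | mem c hc => obtain ⟨i, rfl⟩ := hc; exact h i
  | zero => exact dotProduct_zero v
  | add a b _ _ ha hb => rw [dotProduct_add, ha, hb, add_zero]
  | smul r a _ ha => rw [dotProduct_smul, ha, smul_zero]

theorem vecMul_mem_dualCode_span_rows_iff (G : Matrix (Fin k) (Fin n) F)
    (x : Fin k → F) :
    x ᵥ* G ∈ dualCode (Submodule.span F (Set.range G.row)) ↔ x ᵥ* (G * Gᵀ) = 0 := by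
  rw [mem_dualCode_span_range_iff, ← vecMul_vecMul, vecMul_transpose, funext_iff]
  simp only [mulVec, row, Pi.zero_apply, dotProduct_comm]

theorem span_rows_inf_dualCode_eq_bot_iff (G : Matrix (Fin k) (Fin n) F)
    (hind : LinearIndependent F G.row) :
    Submodule.span F (Set.range G.row) ⊓ dualCode (Submodule.span F (Set.range G.row)) = ⊥ ↔
      ∀ x, x ᵥ* (G * Gᵀ) = 0 → x = 0 := by
  have hinj : Function.Injective G.vecMulLinear := vecMul_injective_iff.2 hind
  rw [← disjoint_iff, ← range_vecMulLinear, Submodule.disjoint_def]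
  constructor
  · intro h x hx
    refine hinj ((h _ (LinearMap.mem_range_self _ x) ?_).trans (map_zero _).symm)
    rwa [range_vecMulLinear, coe_vecMulLinear, vecMul_mem_dualCode_span_rows_iff]
  · rintro h _ ⟨x, rfl⟩ hx
    rw [range_vecMulLinear, coe_vecMulLinear, vecMul_mem_dualCode_span_rows_iff] at hx
    rw [h x hx, map_zero]

end

theorem lcd_iff_det_ne_zero_general {F : Type} [Field F] (n k : ℕ)
    (G : Matrix (Fin k) (Fin n) F)
    (hind : LinearIndependent F (fun i : Fin k => G i))
    (C : Submodule F (Fin n → F))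
    (hC : C = Submodule.span F (Set.range (fun i : Fin k => G i))) :
    C ⊓ dualCode C = ⊥ ↔ (G * Gᵀ).det ≠ 0 := by
  subst hC
  refine (span_rows_inf_dualCode_eq_bot_iff G hind).trans ?_
  rw [Ne, ← exists_vecMul_eq_zero_iff]
  grind

/-- A linear code `C` over a finite field with generator matrix `G` (rows of `G` are a basis
of `C`) satisfies `C ∩ C^⊥ = {0}` iff `det (G * Gᵀ) ≠ 0`. -/
theorem lcd_iff_det_ne_zero {F : Type} [Field F] [Fintype F] (n k : ℕ)
    (G : Matrix (Fin k) (Fin n) F)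
    (hind : LinearIndependent F (fun i : Fin k => G i))
    (C : Submodule F (Fin n → F))
    (hC : C = Submodule.span F (Set.range (fun i : Fin k => G i))) :
    C ⊓ dualCode C = ⊥ ↔ (G * Gᵀ).det ≠ 0 :=
  lcd_iff_det_ne_zero_general n k G hind C hC
end

section
/- Let A be a k×k invertible symmetric matrix over GF(2) with k ≥ 3 odd. Then there exists an index i such that the (k−1)×(k−1) principal submatrix obtained by deleting row i and column i of A is invertible. -/
open Matrix Equiv

/-! If every principal minor of order `k - 1` vanished, the adjugate of `A` would be symmetric
with zero diagonal, hence alternating (in characteristic 2) of odd size and therefore singular.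
But `det (adj A) = (det A) ^ (k - 1) ≠ 0`. -/

theorem Matrix.det_eq_zero_of_transpose_eq_neg_of_diag_eq_zero {n R : Type*} [Fintype n]
    [DecidableEq n] [CommRing R] (hodd : Odd (Fintype.card n)) {B : Matrix n n R}
    (hskew : Bᵀ = -B) (hdiag : ∀ i, B i i = 0) : B.det = 0 := by
  rw [det_apply]
  refine Finset.sum_ninvolution (fun σ => σ⁻¹) (fun σ => ?_) (fun σ hσ hinv => ?_)
    (fun _ => Finset.mem_univ _) inv_inv
  · have hprod : ∏ i, B (σ⁻¹ i) i = -∏ i, B (σ i) i := by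
      calc ∏ i, B (σ⁻¹ i) i = ∏ i, B i (σ i) := (Equiv.prod_comp σ _).symm.trans (by simp)
        _ = ∏ i, -B (σ i) i := Finset.prod_congr rfl fun i _ => congrFun (congrFun hskew (σ i)) i
        _ = -∏ i, B (σ i) i := by rw [Finset.prod_neg, Finset.card_univ, hodd.neg_one_pow]; ring
    rw [Perm.sign_inv, hprod, smul_neg, add_neg_cancel]
  · -- an involution of a set of odd size fixes some point, where the diagonal kills the product
    obtain ⟨i, hi⟩ := Perm.exists_fixed_point_of_prime (p := 2) (n := 1) (σ := σ)
      hodd.not_two_dvd_nat (by rw [pow_one, sq, mul_eq_one_iff_eq_inv, hinv])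
    exact hσ (by rw [Finset.prod_eq_zero (Finset.mem_univ i) (by rw [hi, hdiag]), smul_zero])

theorem exists_invertible_principal_submatrix_odd_general (m : ℕ)
    (A : Matrix (Fin (m + 1)) (Fin (m + 1)) (ZMod 2))
    (hsymm : A.IsSymm) (hdet : A.det ≠ 0)
    (hodd : Odd (m + 1)) :
    ∃ i : Fin (m + 1),
      (A.submatrix i.succAbove i.succAbove).det ≠ 0 := by
  by_contra! hminors
  have hadj_skew : A.adjugateᵀ = -A.adjugate := by rw [hsymm.adjugate.eq, CharTwo.neg_eq]
  have hadj_diag : ∀ i, A.adjugate i i = 0 := fun i => by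
    rw [adjugate_fin_succ_eq_det_submatrix, hminors i, mul_zero]
  have hadj_det := det_eq_zero_of_transpose_eq_neg_of_diag_eq_zero
    (by rwa [Fintype.card_fin]) hadj_skew hadj_diag
  rw [det_adjugate] at hadj_det
  exact hdet (pow_eq_zero_iff'.mp hadj_det).1

/-- A `k × k` invertible symmetric matrix over `GF(2)` with `k ≥ 3` odd has an invertible
`(k−1) × (k−1)` principal submatrix (delete row `i` and column `i` for some `i`). -/
theorem exists_invertible_principal_submatrix_odd (m : ℕ)
    (A : Matrix (Fin (m + 1)) (Fin (m + 1)) (ZMod 2))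
    (hsymm : A.IsSymm) (hdet : A.det ≠ 0)
    (hk : 3 ≤ m + 1) (hodd : Odd (m + 1)) :
    ∃ i : Fin (m + 1),
      (A.submatrix i.succAbove i.succAbove).det ≠ 0 :=
  exists_invertible_principal_submatrix_odd_general m A hsymm hdet hodd
end

section
/- Let A be a k×k invertible symmetric matrix over GF(2) with k ≥ 4 even. Then there exist distinct indices i, j such that the (k−2)×(k−2) principal submatrix obtained by deleting rows i, j and columns i, j of A is invertible. -/
/-!
By Jacobi's complementary minor identity, deleting the rows and columns `S` of an invertible `A`
leaves a minor equal to `det A · det (A⁻¹[S, S])`, so it suffices to find a nonzero `2 × 2`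
principal minor of `B = A⁻¹`, which is again symmetric and invertible. Over `GF(2)`, if all of
them vanish then `b_pq = b_pq ^ 2 = b_pq b_qp = b_pp b_qq`, so `B = d dᵀ` with `d` its diagonal,
which is singular as soon as `B` is at least `2 × 2`.
-/

open Matrix

theorem Matrix.det_toBlocks₁₁_eq_det_mul_det_toBlocks₂₂ {ι κ R : Type*} [Fintype ι] [Fintype κ]
    [DecidableEq ι] [DecidableEq κ] [CommRing R] {M N : Matrix (ι ⊕ κ) (ι ⊕ κ) R}
    (hMN : M * N = 1) : M.toBlocks₁₁.det = M.det * N.toBlocks₂₂.det := by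
  have h₁₂ := congrArg toBlocks₁₂ hMN
  have h₂₂ := congrArg toBlocks₂₂ hMN
  rw [← fromBlocks_toBlocks M, ← fromBlocks_toBlocks N, fromBlocks_multiply,
    ← fromBlocks_one] at h₁₂ h₂₂
  simp only [toBlocks_fromBlocks₁₂, toBlocks_fromBlocks₂₂] at h₁₂ h₂₂
  have hprod : M * fromBlocks 1 N.toBlocks₁₂ 0 N.toBlocks₂₂ =
      fromBlocks M.toBlocks₁₁ 0 M.toBlocks₂₁ 1 := by
    conv_lhs => rw [← fromBlocks_toBlocks M]
    rw [fromBlocks_multiply]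
    simp [h₁₂, h₂₂]
  simpa [det_fromBlocks_zero₂₁, det_fromBlocks_zero₁₂] using (congrArg det hprod).symm

theorem Matrix.det_submatrix_inl_eq_det_mul_det_inv_submatrix_inr {ι κ n R : Type*}
    [Fintype ι] [Fintype κ] [Fintype n] [DecidableEq ι] [DecidableEq κ] [DecidableEq n]
    [CommRing R] (A : Matrix n n R) (hA : IsUnit A.det) (e : ι ⊕ κ ≃ n) :
    (A.submatrix (e ∘ Sum.inl) (e ∘ Sum.inl)).det =
      A.det * (A⁻¹.submatrix (e ∘ Sum.inr) (e ∘ Sum.inr)).det := by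
  have hmul : A.submatrix e e * A⁻¹.submatrix e e = 1 := by
    rw [submatrix_mul_equiv, mul_nonsing_inv _ hA, submatrix_one_equiv]
  rw [← det_submatrix_equiv_self e A]
  exact det_toBlocks₁₁_eq_det_mul_det_toBlocks₂₂ hmul

theorem Matrix.IsSymm.eq_vecMulVec_diag_zmod_two {n : Type*} {B : Matrix n n (ZMod 2)}
    (hB : B.IsSymm) (hminor : ∀ p q, p ≠ q → (B.submatrix ![p, q] ![p, q]).det = 0) :
    B = vecMulVec B.diag B.diag := by
  have hsq : ∀ x : ZMod 2, x * x = x := by decide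
  ext p q
  rcases eq_or_ne p q with rfl | hpq
  · simp [vecMulVec_apply, hsq]
  · have h := hminor p q hpq
    rw [det_fin_two] at h
    simp only [submatrix_apply, cons_val_zero, cons_val_one] at h
    rw [hB.apply p q, hsq, sub_eq_zero] at h
    simp [vecMulVec_apply, h]

theorem Matrix.IsSymm.exists_det_submatrix_fin_two_ne_zero_zmod_two {n : Type*} [Fintype n]
    [DecidableEq n] [Nontrivial n] {B : Matrix n n (ZMod 2)} (hB : B.IsSymm) (hdet : B.det ≠ 0) :
    ∃ p q, p ≠ q ∧ (B.submatrix ![p, q] ![p, q]).det ≠ 0 := by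
  by_contra! hminor
  rw [hB.eq_vecMulVec_diag_zmod_two hminor, det_vecMulVec] at hdet
  exact hdet rfl

noncomputable def Fin.sumSuccAboveEquiv {m : ℕ} (i : Fin (m + 2)) (j : Fin (m + 1)) :
    Fin m ⊕ Fin 2 ≃ Fin (m + 2) :=
  Equiv.ofBijective (Sum.elim (i.succAbove ∘ j.succAbove) ![i, i.succAbove j]) <| by
    refine (Fintype.bijective_iff_injective_and_card _).mpr ⟨?_, by simp⟩
    refine (Fin.succAbove_right_injective.comp Fin.succAbove_right_injective).sumElim ?_ ?_
    · intro a b hab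
      fin_cases a <;> fin_cases b <;> simp_all [eq_comm]
    · intro a b
      fin_cases b
      · exact Fin.succAbove_ne i _
      · exact fun h => Fin.succAbove_ne j a (Fin.succAbove_right_injective h)

theorem exists_invertible_principal_submatrix_even_general (m : ℕ)
    (A : Matrix (Fin (m + 2)) (Fin (m + 2)) (ZMod 2))
    (hsymm : A.IsSymm) (hdet : A.det ≠ 0) :
    ∃ (i : Fin (m + 2)) (j : Fin (m + 1)),
      (A.submatrix (i.succAbove ∘ j.succAbove) (i.succAbove ∘ j.succAbove)).det ≠ 0 := by
  have hA : IsUnit A.det := isUnit_iff_ne_zero.mpr hdet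
  have hinv_symm : A⁻¹.IsSymm := by
    rw [IsSymm, transpose_nonsing_inv, hsymm.eq]
  have hinv_det : A⁻¹.det ≠ 0 := (isUnit_nonsing_inv_det A hA).ne_zero
  obtain ⟨p, q, hpq, hminor⟩ := hinv_symm.exists_det_submatrix_fin_two_ne_zero_zmod_two hinv_det
  obtain ⟨j, rfl⟩ := Fin.exists_succAbove_eq hpq.symm
  refine ⟨p, j, ?_⟩
  have hjacobi := det_submatrix_inl_eq_det_mul_det_inv_submatrix_inr A hA
    (Fin.sumSuccAboveEquiv p j)
  exact hjacobi ▸ mul_ne_zero hdet hminor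

/-- A `k × k` invertible symmetric matrix over `GF(2)` with `k ≥ 4` even has an invertible
`(k−2) × (k−2)` principal submatrix (delete rows and columns indexed by two distinct
indices `i` and `i.succAbove j`). -/
theorem exists_invertible_principal_submatrix_even (m : ℕ)
    (A : Matrix (Fin (m + 2)) (Fin (m + 2)) (ZMod 2))
    (hsymm : A.IsSymm) (hdet : A.det ≠ 0)
    (hk : 4 ≤ m + 2) (heven : Even (m + 2)) :
    ∃ (i : Fin (m + 2)) (j : Fin (m + 1)),
      (A.submatrix (i.succAbove ∘ j.succAbove) (i.succAbove ∘ j.succAbove)).det ≠ 0 :=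
  exists_invertible_principal_submatrix_even_general m A hsymm hdet
end
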